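/- Let P be an n×l binary matrix, θ a real angle, and s ∈ F₂ˡ. Then the correlation coefficient of the IQP distribution satisfies β_s = α_{(P_s, 2θ)} = 2^{−r_s} · Σ_{c∈C(P_s)} exp( 2iθ·(n_s − 2|c|) ), where P_s is the affinification of P by s, n_s its number of rows and r_s the rank of C(P_s). -/

import Mathlib

open Matrix BigOperators Finset

noncomputable section

/-- The binary code generated by the columns of `P`: all vectors `P·s`. -/
def code {m : Type*} [Fintype m] {l : ℕ} (P : Matrix m (Fin l) (ZMod 2)) :
    Finset (m → ZMod 2) :=
  Finset.image P.mulVec Finset.univ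

/-- Rank function of the binary matroid of `P`: the F₂-rank of the submatrix of
rows indexed by `X`. -/
def rho {m : Type*} [Fintype m] {l : ℕ} (P : Matrix m (Fin l) (ZMod 2)) (X : Finset m) : ℕ :=
  (P.submatrix (fun i : {i // i ∈ X} => (i : m)) id).rank

/-- Tutte polynomial of the binary matroid of `P`. -/
def tutte {m : Type*} [Fintype m] {l : ℕ} (P : Matrix m (Fin l) (ZMod 2)) (x y : ℂ) : ℂ :=
  ∑ X ∈ (Finset.univ : Finset m).powerset,
    (x - 1) ^ (rho P Finset.univ - rho P X) * (y - 1) ^ (X.card - rho P X)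

/-- Normalised weight enumerator. -/
def alpha {m : Type*} [Fintype m] {l : ℕ} (P : Matrix m (Fin l) (ZMod 2)) (θ : ℝ) : ℂ :=
  (2 : ℂ) ^ (-(P.rank : ℤ)) *
    ∑ c ∈ code P, Complex.exp (Complex.I * θ * ((Fintype.card m : ℂ) - 2 * (hammingNorm c : ℂ)))

/-- The IQP probability distribution of an X-program `(P, θ)`. -/
def iqpProb {n l : ℕ} (P : Matrix (Fin n) (Fin l) (ZMod 2)) (θ : ℝ) (x : Fin l → ZMod 2) : ℝ :=
  ‖(2 : ℂ) ^ (-(l : ℤ)) *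
    ∑ a : Fin l → ZMod 2, (-1 : ℂ) ^ (x ⬝ᵥ a).val *
      Complex.exp (Complex.I * θ * ∑ j, (-1 : ℂ) ^ ((P j) ⬝ᵥ a).val)‖ ^ 2

/-- Affinification: the submatrix of rows `P_j` with `P_j ⬝ s = 1`. -/
def affin {n l : ℕ} (P : Matrix (Fin n) (Fin l) (ZMod 2)) (s : Fin l → ZMod 2) :
    Matrix {j : Fin n // (P j) ⬝ᵥ s = 1} (Fin l) (ZMod 2) :=
  Matrix.of fun j k => P j.1 k


/-! Expanding `‖amplitude‖²` as a double sum over `a, b` and summing the characters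
`(-1)^(x ⬝ᵥ (s + a + b))` over `x` forces `b = s + a`, so
`β_s = 2^(-l) ∑_a exp(iθ f(a)) · conj(exp(iθ f(s + a)))` with `f(a) = ∑_j (-1)^(P_j ⬝ᵥ a)`.
Under `a ↦ s + a` exactly the rows with `P_j ⬝ᵥ s = 1` change sign, so the phase is
`2θ (n_s - 2|P_s a|)`; finally every codeword of `C(P_s)` is `P_s a` for exactly
`2^(l - r_s)` vectors `a`. -/

theorem neg_one_pow_val_add {R : Type*} [Ring R] (u w : ZMod 2) :
    (-1 : R) ^ (u + w).val = (-1) ^ u.val * (-1) ^ w.val := by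
  rw [ZMod.val_add, ← neg_one_pow_eq_pow_mod_two, pow_add]

theorem one_sub_neg_one_pow_val {R : Type*} [Ring R] (w : ZMod 2) :
    1 - (-1 : R) ^ w.val = if w = 1 then 2 else 0 := by
  rcases (show w = 0 ∨ w = 1 by decide +revert) with rfl | rfl <;> norm_num [ZMod.val_one]

theorem sum_neg_one_pow_val_eq_card_sub_two_mul_hammingNorm {R : Type*} [Ring R]
    {m : Type*} [Fintype m] (v : m → ZMod 2) :
    ∑ j, (-1 : R) ^ (v j).val = Fintype.card m - 2 * hammingNorm v := by
  have hχ : ∀ u : ZMod 2, (-1 : R) ^ u.val = 1 - 2 * if u ≠ 0 then 1 else 0 := by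
    intro u
    rcases (show u = 0 ∨ u = 1 by decide +revert) with rfl | rfl <;> norm_num [ZMod.val_one]
  simp only [hχ, Finset.sum_sub_distrib, ← Finset.mul_sum, Finset.sum_boole, hammingNorm]
  simp

theorem sum_neg_one_pow_dotProduct {R : Type*} [Ring R] [NoZeroDivisors R] [CharZero R]
    {ι : Type*} [Fintype ι] [DecidableEq ι] (v : ι → ZMod 2) :
    ∑ x : ι → ZMod 2, (-1 : R) ^ (x ⬝ᵥ v).val = if v = 0 then 2 ^ Fintype.card ι else 0 := by
  split_ifs with hv
  · simp [hv, ZMod.card]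
  obtain ⟨k, hk0⟩ := Function.ne_iff.mp hv
  have hk : v k = 1 := Fin.eq_one_of_ne_zero _ hk0
  -- translating `x` by the `k`-th unit vector flips the sign of every term
  have hflip := Fintype.sum_equiv (Equiv.addRight (Pi.single k 1))
    (fun x => (-1 : R) ^ (x ⬝ᵥ v).val) (fun x => -(-1 : R) ^ (x ⬝ᵥ v).val) fun x => by
      simp [add_dotProduct, neg_one_pow_val_add, single_dotProduct, hk, ZMod.val_one]
  rw [Finset.sum_neg_distrib, eq_neg_iff_add_eq_zero] at hflip
  exact add_self_eq_zero.mp hflip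

theorem sum_neg_one_pow_dotProduct_mul_sum_mul_sum {R : Type*} [CommRing R] [NoZeroDivisors R]
    [CharZero R] {ι : Type*} [Fintype ι] [DecidableEq ι] (s : ι → ZMod 2)
    (f g : (ι → ZMod 2) → R) :
    ∑ x : ι → ZMod 2, (-1 : R) ^ (x ⬝ᵥ s).val *
        ((∑ a, (-1 : R) ^ (x ⬝ᵥ a).val * f a) * ∑ b, (-1 : R) ^ (x ⬝ᵥ b).val * g b) =
      2 ^ Fintype.card ι * ∑ a, f a * g (s + a) := by
  have hzero : ∀ a b : ι → ZMod 2, s + a + b = 0 ↔ s + a = b := fun a b => by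
    rw [add_eq_zero_iff_eq_neg, ZModModule.neg_eq_self]
  calc _ = ∑ x : ι → ZMod 2, ∑ a, ∑ b, f a * g b * (-1 : R) ^ (x ⬝ᵥ (s + a + b)).val := by
        refine Finset.sum_congr rfl fun x _ => ?_
        rw [Finset.sum_mul_sum, Finset.mul_sum]
        simp only [Finset.mul_sum, dotProduct_add, neg_one_pow_val_add]
        exact Finset.sum_congr rfl fun a _ => Finset.sum_congr rfl fun b _ => by ring
    _ = ∑ a, ∑ b, f a * g b * ∑ x : ι → ZMod 2, (-1 : R) ^ (x ⬝ᵥ (s + a + b)).val := by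
        simp only [Finset.mul_sum]
        rw [Finset.sum_comm]
        exact Finset.sum_congr rfl fun a _ => Finset.sum_comm
    _ = _ := by
        simp only [sum_neg_one_pow_dotProduct, hzero, mul_ite, mul_zero, Finset.sum_ite_eq,
          Finset.mem_univ, if_true, Finset.mul_sum]
        exact Finset.sum_congr rfl fun a _ => by ring

theorem card_filter_mulVec_eq {K : Type*} [Field K] [Fintype K] [DecidableEq K]
    {m ι : Type*} [Fintype m] [Fintype ι] [DecidableEq ι] (Q : Matrix m ι K) {c : m → K}
    (hc : c ∈ Set.range Q.mulVec) :
    #{a | Q *ᵥ a = c} = Fintype.card K ^ (Fintype.card ι - Q.rank) := by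
  obtain ⟨a₀, rfl⟩ := hc
  have htranslate : #{a | Q *ᵥ a = Q *ᵥ a₀} = #{a | Q *ᵥ a = 0} :=
    Finset.card_nbij' (· - a₀) (· + a₀) (fun a ha => by simp_all [mulVec_sub])
      (fun a ha => by simp_all [mulVec_add]) (fun a _ => by simp) (fun a _ => by simp)
  rw [htranslate]
  have hker : #{a | Q *ᵥ a = 0} = Nat.card (LinearMap.ker Q.mulVecLin) := by
    rw [← Fintype.card_subtype, ← Nat.card_eq_fintype_card]
    exact Nat.card_congr (Equiv.subtypeEquivRight fun a => by simp)
  have hnullity := LinearMap.finrank_range_add_finrank_ker Q.mulVecLin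
  rw [Module.finrank_fintype_fun_eq_card] at hnullity
  rw [hker, Module.natCard_eq_pow_finrank (K := K), Nat.card_eq_fintype_card, Matrix.rank]
  congr 1
  omega

theorem sum_comp_mulVec {M : Type*} [AddCommMonoid M] {m : Type*} [Fintype m] {l : ℕ}
    (Q : Matrix m (Fin l) (ZMod 2)) (g : (m → ZMod 2) → M) :
    ∑ a, g (Q *ᵥ a) = 2 ^ (l - Q.rank) • ∑ c ∈ code Q, g c := by
  classical
  rw [← Finset.sum_fiberwise_of_maps_to (g := Q.mulVec) (t := code Q)
    fun a _ => Finset.mem_image_of_mem _ (Finset.mem_univ a), Finset.smul_sum]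
  refine Finset.sum_congr rfl fun c hc => ?_
  obtain ⟨a, -, rfl⟩ := Finset.mem_image.mp hc
  rw [Finset.sum_congr rfl fun b hb => congrArg g (Finset.mem_filter.mp hb).2, Finset.sum_const,
    card_filter_mulVec_eq Q ⟨a, rfl⟩, ZMod.card, Fintype.card_fin]

theorem sum_neg_one_pow_sub_sum_neg_one_pow_add {R : Type*} [Ring R] {n l : ℕ}
    (P : Matrix (Fin n) (Fin l) (ZMod 2)) (s a : Fin l → ZMod 2) :
    ∑ j, (-1 : R) ^ (P j ⬝ᵥ a).val - ∑ j, (-1 : R) ^ (P j ⬝ᵥ (s + a)).val =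
      2 * ∑ j, (-1 : R) ^ ((affin P s *ᵥ a) j).val := by
  have hterm : ∀ j, (-1 : R) ^ (P j ⬝ᵥ a).val - (-1 : R) ^ (P j ⬝ᵥ (s + a)).val =
      if P j ⬝ᵥ s = 1 then 2 * (-1 : R) ^ (P j ⬝ᵥ a).val else 0 := fun j => by
    rw [dotProduct_add, neg_one_pow_val_add, ← one_sub_mul, one_sub_neg_one_pow_val, ite_mul,
      zero_mul]
  rw [← Finset.sum_sub_distrib, Finset.sum_congr rfl fun j _ => hterm j, ← Finset.sum_filter,
    Finset.mul_sum, Finset.sum_subtype (p := fun j => P j ⬝ᵥ s = 1) _ fun j => by simp]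
  rfl

def iqpPhase {n l : ℕ} (P : Matrix (Fin n) (Fin l) (ZMod 2)) (θ : ℝ) (a : Fin l → ZMod 2) : ℂ :=
  Complex.exp (Complex.I * θ * ∑ j, (-1 : ℂ) ^ (P j ⬝ᵥ a).val)

theorem conj_iqpPhase {n l : ℕ} (P : Matrix (Fin n) (Fin l) (ZMod 2)) (θ : ℝ)
    (a : Fin l → ZMod 2) :
    starRingEnd ℂ (iqpPhase P θ a) =
      Complex.exp (-(Complex.I * θ * ∑ j, (-1 : ℂ) ^ (P j ⬝ᵥ a).val)) := by
  rw [iqpPhase, ← Complex.exp_conj]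
  simp

theorem iqpPhase_mul_conj_iqpPhase_add {n l : ℕ} (P : Matrix (Fin n) (Fin l) (ZMod 2)) (θ : ℝ)
    (s a : Fin l → ZMod 2) :
    iqpPhase P θ a * starRingEnd ℂ (iqpPhase P θ (s + a)) =
      Complex.exp (Complex.I * ↑(2 * θ) *
        (Fintype.card {j // P j ⬝ᵥ s = 1} - 2 * hammingNorm (affin P s *ᵥ a))) := by
  rw [conj_iqpPhase, iqpPhase, ← Complex.exp_add,
    ← sum_neg_one_pow_val_eq_card_sub_two_mul_hammingNorm]
  congr 1
  have hdiff := sum_neg_one_pow_sub_sum_neg_one_pow_add (R := ℂ) P s a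
  push_cast
  linear_combination Complex.I * θ * hdiff

theorem iqpProb_eq {n l : ℕ} (P : Matrix (Fin n) (Fin l) (ZMod 2)) (θ : ℝ)
    (x : Fin l → ZMod 2) :
    (iqpProb P θ x : ℂ) = ((2 : ℂ) ^ (-(l : ℤ))) ^ 2 *
      ((∑ a, (-1 : ℂ) ^ (x ⬝ᵥ a).val * iqpPhase P θ a) *
        ∑ b, (-1 : ℂ) ^ (x ⬝ᵥ b).val * starRingEnd ℂ (iqpPhase P θ b)) := by
  rw [iqpProb, Complex.sq_norm, ← Complex.mul_conj]
  simp only [map_mul, map_sum, map_zpow₀, map_ofNat, map_pow, map_neg, map_one]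
  unfold iqpPhase
  ring

theorem sum_neg_one_pow_mul_iqpProb {n l : ℕ} (P : Matrix (Fin n) (Fin l) (ZMod 2)) (θ : ℝ)
    (s : Fin l → ZMod 2) :
    ∑ x : Fin l → ZMod 2, (-1 : ℂ) ^ (x ⬝ᵥ s).val * iqpProb P θ x =
      (2 : ℂ) ^ (-(l : ℤ)) * ∑ a, iqpPhase P θ a * starRingEnd ℂ (iqpPhase P θ (s + a)) := by
  calc _ = ((2 : ℂ) ^ (-(l : ℤ))) ^ 2 * ∑ x : Fin l → ZMod 2, (-1 : ℂ) ^ (x ⬝ᵥ s).val *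
          ((∑ a, (-1 : ℂ) ^ (x ⬝ᵥ a).val * iqpPhase P θ a) *
            ∑ b, (-1 : ℂ) ^ (x ⬝ᵥ b).val * starRingEnd ℂ (iqpPhase P θ b)) := by
        rw [Finset.mul_sum]
        exact Finset.sum_congr rfl fun x _ => by rw [iqpProb_eq]; ring
    _ = ((2 : ℂ) ^ (-(l : ℤ))) ^ 2 * 2 ^ l *
          ∑ a, iqpPhase P θ a * starRingEnd ℂ (iqpPhase P θ (s + a)) := by
        rw [sum_neg_one_pow_dotProduct_mul_sum_mul_sum, Fintype.card_fin, mul_assoc]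
    _ = _ := by
        rw [sq, mul_assoc ((2 : ℂ) ^ (-(l : ℤ))), ← zpow_natCast (2 : ℂ) l,
          ← zpow_add₀ two_ne_zero, neg_add_cancel, zpow_zero, mul_one]

/-- the correlation coefficient satisfies `β_s = α_{(P_s, 2θ)}`. -/
theorem beta_eq_alpha_affin {n l : ℕ} (P : Matrix (Fin n) (Fin l) (ZMod 2)) (θ : ℝ)
    (s : Fin l → ZMod 2) :
    ((∑ x : Fin l → ZMod 2, (-1 : ℝ) ^ (x ⬝ᵥ s).val * iqpProb P θ x : ℝ) : ℂ) =
      alpha (affin P s) (2 * θ) := by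
  have hrank : (affin P s).rank ≤ l :=
    (affin P s).rank_le_card_width.trans_eq (Fintype.card_fin l)
  push_cast
  rw [sum_neg_one_pow_mul_iqpProb]
  simp only [iqpPhase_mul_conj_iqpPhase_add]
  rw [sum_comp_mulVec (affin P s) fun c => Complex.exp (Complex.I * ↑(2 * θ) *
    (Fintype.card {j // P j ⬝ᵥ s = 1} - 2 * hammingNorm c)), alpha, nsmul_eq_mul, ← mul_assoc]
  congr 1
  rw [Nat.cast_pow, Nat.cast_ofNat, ← zpow_natCast, ← zpow_add₀ two_ne_zero, Nat.cast_sub hrank]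
  ring_nf

end
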